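/- Every solution of the nonlinear AC power flow equations is a solution of the QC relaxation: if z ∈ ℝ^{4N} satisfies the AC power flow equations, then there exist auxiliary variables z_QC (given by the true values of the products, squares and trigonometric terms) such that all QC envelope inequalities are satisfied, provided all variables lie within their stated bounds. Consequently the AC feasibility set is contained in the QC feasibility set. -/

import Mathlib

/-!
The McCormick and quadratic envelopes come from the nonnegativity of products of distances of
`v_i, v_j` to their bounds. Put `x = θ̄ / 2`. On `[0, 2x]` the tangent to `sin` at `x` dominates
`sin` by concavity. On `[-2x, 0]`, `sin` lies below its chord (concavity of `sin` on `[0, 2x]`),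
and this chord lies below the tangent because both are affine and the comparison holds at the two
ends: `x cos x ≤ sin x` at `0`, and `3x cos x ≤ sin x + sin 2x` at `-2x`. The upper `cos`
envelope is the chord inequality `t sin u ≤ u sin t` for the half angles, through
`1 - cos y = 2 sin² (y / 2)`.
-/

open Real Set

theorem mcCormick_bounds_of_mem_Icc {a b c d x y : ℝ} (hx : x ∈ Icc a b) (hy : y ∈ Icc c d) :
    a * y + c * x - a * c ≤ x * y ∧ b * y + d * x - b * d ≤ x * y ∧
      x * y ≤ a * y + d * x - a * d ∧ x * y ≤ b * y + c * x - b * c := by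
  obtain ⟨hax, hxb⟩ := hx
  obtain ⟨hcy, hyd⟩ := hy
  refine ⟨?_, ?_, ?_, ?_⟩
  · nlinarith [mul_nonneg (sub_nonneg.2 hax) (sub_nonneg.2 hcy)]
  · nlinarith [mul_nonneg (sub_nonneg.2 hxb) (sub_nonneg.2 hyd)]
  · nlinarith [mul_nonneg (sub_nonneg.2 hax) (sub_nonneg.2 hyd)]
  · nlinarith [mul_nonneg (sub_nonneg.2 hxb) (sub_nonneg.2 hcy)]

theorem sq_le_add_mul_sub_mul {a b x : ℝ} (hx : x ∈ Icc a b) :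
    x ^ 2 ≤ (a + b) * x - a * b := by
  nlinarith [mul_nonneg (sub_nonneg.2 hx.1) (sub_nonneg.2 hx.2)]

theorem ConcaveOn.le_add_mul_sub_of_hasDerivAt {S : Set ℝ} {f : ℝ → ℝ} {f' x y : ℝ}
    (hf : ConcaveOn ℝ S f) (hx : x ∈ S) (hy : y ∈ S) (hf' : HasDerivAt f f' x) :
    f y ≤ f x + f' * (y - x) := by
  rcases lt_trichotomy x y with hxy | rfl | hyx
  · have := hf.slope_le_of_hasDerivAt hx hy hxy hf'
    rw [slope_def_field, div_le_iff₀ (sub_pos.2 hxy)] at this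
    linarith
  · simp
  · have := hf.le_slope_of_hasDerivAt hy hx hyx hf'
    rw [slope_def_field, le_div_iff₀ (sub_pos.2 hyx)] at this
    linarith

namespace Real

theorem sin_le_sin_add_cos_mul_sub {x θ : ℝ} (hx : x ∈ Icc 0 π) (hθ : θ ∈ Icc 0 π) :
    sin θ ≤ sin x + cos x * (θ - x) :=
  strictConcaveOn_sin_Icc.concaveOn.le_add_mul_sub_of_hasDerivAt hx hθ (hasDerivAt_sin x)

theorem mul_sin_le_mul_sin {t u : ℝ} (ht : 0 ≤ t) (htu : t ≤ u) (hu : u ≤ π) :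
    t * sin u ≤ u * sin t := by
  rcases ht.eq_or_lt with rfl | ht
  · simp
  have hmem : ∀ {s}, 0 < s → s ≤ π → s ∈ Icc 0 π \ {0} := fun hs hsπ =>
    ⟨⟨hs.le, hsπ⟩, hs.ne'⟩
  have := strictConcaveOn_sin_Icc.concaveOn.slope_anti ⟨le_rfl, pi_pos.le⟩
    (hmem ht (htu.trans hu)) (hmem (ht.trans_le htu) hu) htu
  simp only [slope_def_field, sin_zero, sub_zero] at this
  rw [div_le_div_iff₀ (ht.trans_le htu) ht] at this
  linarith

theorem cos_eq_one_sub_two_mul_sin_half_sq (x : ℝ) : cos x = 1 - 2 * sin (x / 2) ^ 2 := by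
  rw [← cos_two_mul_eq_one_sub, mul_div_cancel₀ x two_ne_zero]

theorem cos_le_one_sub_sq_div_two_add_pow_four_div {x : ℝ} (hx0 : 0 ≤ x) (hx : x ^ 2 ≤ 24) :
    cos x ≤ 1 - x ^ 2 / 2 + x ^ 4 / 24 := by
  have hsin : x / 2 - (x / 2) ^ 3 / 6 ≤ sin (x / 2) := sin_ge_sub_cube (by positivity)
  have hcubic : 0 ≤ x / 2 - (x / 2) ^ 3 / 6 := by nlinarith
  rw [cos_eq_one_sub_two_mul_sin_half_sq]
  nlinarith [mul_le_mul hsin hsin hcubic (hcubic.trans hsin), pow_nonneg hx0 6]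

theorem three_mul_mul_cos_le_sin_add_sin_two_mul {x : ℝ} (hx0 : 0 ≤ x) (hx : x ≤ 3) :
    3 * x * cos x ≤ sin x + sin (2 * x) := by
  -- Replacing `sin x` and `cos x` by their Taylor bounds leaves `x ^ 5 * (9 - x ^ 2) / 72`;
  -- the factor `1 + 2 * (1 - x ^ 2 / 2 + x ^ 4 / 24)` is the square `(x ^ 2 - 6) ^ 2 / 12`.
  have hcos : cos x ≤ 1 - x ^ 2 / 2 + x ^ 4 / 24 :=
    cos_le_one_sub_sq_div_two_add_pow_four_div hx0 (by nlinarith)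
  have h1 : (2 * sin x - 3 * x) * (1 - x ^ 2 / 2 + x ^ 4 / 24) ≤ (2 * sin x - 3 * x) * cos x :=
    mul_le_mul_of_nonpos_left hcos (by linarith [sin_le hx0])
  have h2 : (x - x ^ 3 / 6) * ((x ^ 2 - 6) ^ 2 / 12) ≤ sin x * ((x ^ 2 - 6) ^ 2 / 12) :=
    mul_le_mul_of_nonneg_right (sin_ge_sub_cube hx0) (by positivity)
  have h3 : 0 ≤ x ^ 5 * (9 - x ^ 2) := mul_nonneg (pow_nonneg hx0 5) (by nlinarith)
  rw [sin_two_mul]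
  linear_combination h1 + h2 + h3 / 72

theorem sin_le_cos_mul_sub_add_sin {x θ : ℝ} (hx0 : 0 < x) (hx : x ≤ π / 2) (hθ : |θ| ≤ 2 * x) :
    sin θ ≤ cos x * (θ - x) + sin x := by
  have hxmem : x ∈ Icc 0 π := ⟨hx0.le, by linarith [pi_pos]⟩
  rcases abs_le.1 hθ with ⟨hθl, hθu⟩
  rcases le_total 0 θ with hθ0 | hθ0
  · linarith [sin_le_sin_add_cos_mul_sub hxmem ⟨hθ0, by linarith⟩]
  have htangent_zero : 0 ≤ sin x - x * cos x := by
    linarith [sin_le_sin_add_cos_mul_sub hxmem ⟨le_rfl, pi_pos.le⟩, sin_zero]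
  have hchord := mul_sin_le_mul_sin (neg_nonneg.2 hθ0) (by linarith : -θ ≤ 2 * x) (by linarith)
  have hend := three_mul_mul_cos_le_sin_add_sin_two_mul hx0.le (by linarith [pi_lt_d2])
  rw [sin_neg] at hchord
  have hmul : 0 ≤ 2 * x * (cos x * (θ - x) + sin x - sin θ) := by
    nlinarith [mul_nonneg (by linarith : 0 ≤ 2 * x + θ) htangent_zero,
      mul_nonneg (neg_nonneg.2 hθ0) (sub_nonneg.2 hend)]
  linarith [nonneg_of_mul_nonneg_right hmul (by linarith : 0 < 2 * x)]

theorem cos_mul_add_sub_sin_le_sin {x θ : ℝ} (hx0 : 0 < x) (hx : x ≤ π / 2)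
    (hθ : |θ| ≤ 2 * x) : cos x * (θ + x) - sin x ≤ sin θ := by
  have := sin_le_cos_mul_sub_add_sin hx0 hx (θ := -θ) (by rwa [abs_neg])
  rw [sin_neg] at this
  linarith

theorem cos_le_one_sub_div_sq_mul_sq {b θ : ℝ} (hθ : |θ| ≤ b) (hb : b ≤ 2 * π) :
    cos θ ≤ 1 - ((1 - cos b) / b ^ 2) * θ ^ 2 := by
  have hchord : |θ| / 2 * sin (b / 2) ≤ b / 2 * sin (|θ| / 2) :=
    mul_sin_le_mul_sin (by positivity) (by linarith) (by linarith)
  have hsin_nonneg : 0 ≤ sin (b / 2) :=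
    sin_nonneg_of_nonneg_of_le_pi (by linarith [abs_nonneg θ]) (by linarith)
  have hsq : θ ^ 2 * sin (b / 2) ^ 2 ≤ b ^ 2 * sin (|θ| / 2) ^ 2 := by
    rw [← sq_abs θ, ← mul_pow, ← mul_pow]
    exact pow_le_pow_left₀ (mul_nonneg (abs_nonneg θ) hsin_nonneg) (by linarith) 2
  have hdiv : 2 * sin (b / 2) ^ 2 * θ ^ 2 / b ^ 2 ≤ 2 * sin (|θ| / 2) ^ 2 :=
    div_le_of_le_mul₀ (sq_nonneg b) (by positivity) (by linarith)
  rw [← cos_abs θ, cos_eq_one_sub_two_mul_sin_half_sq b, cos_eq_one_sub_two_mul_sin_half_sq |θ|,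
    sub_sub_cancel, div_mul_eq_mul_div]
  linarith

theorem cos_le_cos_of_abs_le {b θ : ℝ} (hθ : |θ| ≤ b) (hb : b ≤ π) : cos b ≤ cos θ := by
  rw [← cos_abs θ]
  exact cos_le_cos_of_nonneg_of_le_pi (abs_nonneg θ) hb hθ

end Real

/-- Exactness of the QC relaxation on true solutions: if the voltage magnitudes
and the phase angle difference lie within their stated bounds, then the
auxiliary variables given by the true values of the product `v_i v_j`, the
squares `v_i²`, `v_j²` and the trigonometric terms `sin θ`, `cos θ` satisfy all
QC envelope inequalities (McCormick, quadratic, and trigonometric envelopes).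
Consequently every AC power flow solution is feasible for the QC relaxation. -/
theorem ac_solution_satisfies_qc_envelopes
    (vli vui vlj vuj θb vi vj θ : ℝ)
    (hθb0 : 0 < θb) (hθbπ : θb ≤ Real.pi / 2)
    (hvi : vi ∈ Set.Icc vli vui) (hvj : vj ∈ Set.Icc vlj vuj)
    (hθ : |θ| ≤ θb) :
    -- McCormick envelope for the product v_i v_j
    (vi * vj ≥ vli * vj + vlj * vi - vli * vlj ∧
     vi * vj ≥ vui * vj + vuj * vi - vui * vuj ∧
     vi * vj ≤ vli * vj + vuj * vi - vli * vuj ∧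
     vi * vj ≤ vui * vj + vlj * vi - vui * vlj) ∧
    -- quadratic envelopes for the squares
    (vi ^ 2 ≤ (vli + vui) * vi - vli * vui ∧
     vj ^ 2 ≤ (vlj + vuj) * vj - vlj * vuj) ∧
    -- linear envelopes for sin
    (Real.sin θ ≤ Real.cos (θb / 2) * (θ - θb / 2) + Real.sin (θb / 2) ∧
     Real.sin θ ≥ Real.cos (θb / 2) * (θ + θb / 2) - Real.sin (θb / 2)) ∧
    -- envelopes for cos
    (Real.cos θ ≤ 1 - ((1 - Real.cos θb) / θb ^ 2) * θ ^ 2 ∧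
     Real.cos θ ≥ Real.cos θb) := by
  have hhalf : 0 < θb / 2 := half_pos hθb0
  have hhalf_le : θb / 2 ≤ π / 2 := by linarith [pi_pos]
  have hθ' : |θ| ≤ 2 * (θb / 2) := by linarith
  exact ⟨mcCormick_bounds_of_mem_Icc hvi hvj,
    ⟨sq_le_add_mul_sub_mul hvi, sq_le_add_mul_sub_mul hvj⟩,
    ⟨sin_le_cos_mul_sub_add_sin hhalf hhalf_le hθ', cos_mul_add_sub_sin_le_sin hhalf hhalf_le hθ'⟩,
    cos_le_one_sub_div_sq_mul_sq hθ (by linarith [pi_pos]),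
    cos_le_cos_of_abs_le hθ (by linarith [pi_pos])⟩
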